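/- Let ψ : ℝ → ℝ^d and ψ' : ℝ → ℝ^d be such that ψ' is integrable and square-integrable on a compact interval I = [a, b] and ψ(y) − ψ(x) = ∫_x^y ψ'(s) ds for all a ≤ x ≤ y ≤ b. Let B ⊆ ℝ^d be a nonempty compact set. For a closed sub-interval Q = [α, β] ⊆ I, let u_ψ(Q) = sqrt( (β − α) ∫_Q ‖ψ'(s)‖² ds ), let U_Q = { x : ‖ψ(α) − x‖ + ‖x − ψ(β)‖ ≤ u_ψ(Q) }, let d_lb(Q) = inf{ ‖x − b‖ : x ∈ U_Q, b ∈ B }, let d_ub(Q) = inf{ ‖ψ((α+β)/2) − b‖ : b ∈ B }, and let k = ∫_I ‖ψ'(s)‖² ds. Then d_ub(Q) − d_lb(Q) ≤ sqrt( (β − α) · k ). -/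

import Mathlib

/-!
The midpoint ψ(m) lies in the ellipsoid `U_Q` with foci ψ(α), ψ(β): the two chords from ψ(m) to
the endpoints are together at most the length `∫_Q ‖ψ'‖` of the arc, which by Cauchy–Schwarz is at
most `u_ψ(Q)`. An ellipsoid with major axis `u` has diameter at most `u`, so every point of `U_Q` is
within `u_ψ(Q) ≤ sqrt(|Q| k)` of ψ(m), and the distance from ψ(m) to `B` exceeds that from any
point of `U_Q` by at most this much.
-/

open MeasureTheory Set

theorem integral_norm_le_sqrt_measureReal_mul_integral_norm_sq {α E : Type*} [MeasurableSpace α]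
    [NormedAddCommGroup E] {μ : Measure α} [IsFiniteMeasure μ] {f : α → E} (hf : MemLp f 2 μ) :
    ∫ x, ‖f x‖ ∂μ ≤ √(μ.real univ * ∫ x, ‖f x‖ ^ 2 ∂μ) := by
  have hHolder := integral_mul_norm_le_Lp_mul_Lq Real.HolderConjugate.two_two
    (f := fun _ => (1 : ℝ)) (by simpa using memLp_const (μ := μ) (1 : ℝ))
    (by simpa using hf.norm)
  simp only [norm_one, norm_norm, one_mul, one_pow, integral_const, smul_eq_mul, mul_one,
    Real.rpow_two] at hHolder
  rwa [Real.sqrt_mul measureReal_nonneg, Real.sqrt_eq_rpow, Real.sqrt_eq_rpow]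

theorem intervalIntegral_norm_le_sqrt_mul_integral_norm_sq {E : Type*} [NormedAddCommGroup E]
    {f : ℝ → E} {x y : ℝ} (hxy : x ≤ y) (hf : MemLp f 2 (volume.restrict (Icc x y))) :
    ∫ s in x..y, ‖f s‖ ≤ √((y - x) * ∫ s in Icc x y, ‖f s‖ ^ 2) := by
  rw [intervalIntegral.integral_of_le hxy, ← integral_Icc_eq_integral_Ioc,
    ← Real.volume_real_Icc_of_le hxy, ← measureReal_restrict_apply_univ]
  exact integral_norm_le_sqrt_measureReal_mul_integral_norm_sq hf

theorem norm_sub_add_norm_sub_le_intervalIntegral_norm {E : Type*} [NormedAddCommGroup E]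
    [NormedSpace ℝ E] {γ γ' : ℝ → E} {x m y : ℝ} (hxm : x ≤ m) (hmy : m ≤ y)
    (hγ₁ : γ m - γ x = ∫ s in x..m, γ' s) (hγ₂ : γ y - γ m = ∫ s in m..y, γ' s)
    (hγ' : IntervalIntegrable (fun s => ‖γ' s‖) volume x y) :
    ‖γ x - γ m‖ + ‖γ m - γ y‖ ≤ ∫ s in x..y, ‖γ' s‖ := by
  rw [norm_sub_rev, hγ₁, norm_sub_rev, hγ₂, ← intervalIntegral.integral_add_adjacent_intervals
    (hγ'.mono_set (uIcc_subset_uIcc_left (Icc_subset_uIcc ⟨hxm, hmy⟩)))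
    (hγ'.mono_set (uIcc_subset_uIcc_right (Icc_subset_uIcc ⟨hxm, hmy⟩)))]
  exact add_le_add (intervalIntegral.norm_integral_le_integral_norm hxm)
    (intervalIntegral.norm_integral_le_integral_norm hmy)

theorem norm_sub_le_of_norm_sub_add_norm_sub_le {E : Type*} [SeminormedAddCommGroup E]
    {p q x y : E} {u : ℝ} (hx : ‖p - x‖ + ‖x - q‖ ≤ u) (hy : ‖p - y‖ + ‖y - q‖ ≤ u) :
    ‖x - y‖ ≤ u := by
  have hp : ‖x - y‖ ≤ ‖p - x‖ + ‖p - y‖ := by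
    simpa only [norm_sub_rev x p] using norm_sub_le_norm_sub_add_norm_sub x p y
  have hq : ‖x - y‖ ≤ ‖x - q‖ + ‖y - q‖ := by
    simpa only [norm_sub_rev q y] using norm_sub_le_norm_sub_add_norm_sub x q y
  linarith

theorem sInf_norm_sub_sub_sInf_norm_sub_le {E : Type*} [SeminormedAddCommGroup E]
    {U B : Set E} {z : E} {R : ℝ} (hz : z ∈ U) (hB : B.Nonempty)
    (hR : ∀ x ∈ U, ‖z - x‖ ≤ R) :
    sInf {r : ℝ | ∃ c ∈ B, r = ‖z - c‖} - sInf {r : ℝ | ∃ x ∈ U, ∃ c ∈ B, r = ‖x - c‖} ≤ R := by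
  obtain ⟨c₀, hc₀⟩ := hB
  rw [sub_le_comm]
  refine le_csInf ⟨_, z, hz, c₀, hc₀, rfl⟩ ?_
  rintro _ ⟨x, hx, c, hc, rfl⟩
  calc sInf {r : ℝ | ∃ c ∈ B, r = ‖z - c‖} - R
      ≤ ‖z - c‖ - ‖z - x‖ := by
        gcongr
        · exact csInf_le ⟨0, by rintro _ ⟨c, -, rfl⟩; positivity⟩ ⟨c, hc, rfl⟩
        · exact hR x hx
    _ ≤ ‖x - c‖ := by linarith [norm_sub_le_norm_sub_add_norm_sub z x c]

theorem gap_le_sqrt_k_general (d : ℕ)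
    (ψ ψ' : ℝ → EuclideanSpace ℝ (Fin d)) (a b : ℝ)
    (hint : IntegrableOn ψ' (Icc a b))
    (hint2 : IntegrableOn (fun s => ‖ψ' s‖ ^ 2) (Icc a b))
    (hftc : ∀ x y, a ≤ x → x ≤ y → y ≤ b → ψ y - ψ x = ∫ s in x..y, ψ' s)
    (B : Set (EuclideanSpace ℝ (Fin d))) (hBne : B.Nonempty)
    (α β : ℝ) (hαβ : α ≤ β) (ha : a ≤ α) (hb : β ≤ b) :
    sInf {r : ℝ | ∃ c ∈ B, r = ‖ψ ((α + β) / 2) - c‖} -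
      sInf {r : ℝ | ∃ x ∈ {y : EuclideanSpace ℝ (Fin d) |
          ‖ψ α - y‖ + ‖y - ψ β‖ ≤
            Real.sqrt ((β - α) * ∫ s in Icc α β, ‖ψ' s‖ ^ 2)},
        ∃ c ∈ B, r = ‖x - c‖} ≤
      Real.sqrt ((β - α) * ∫ s in Icc a b, ‖ψ' s‖ ^ 2) := by
  set m := (α + β) / 2 with hm
  have hαm : α ≤ m := by linarith
  have hmβ : m ≤ β := by linarith
  have hQ : Icc α β ⊆ Icc a b := Icc_subset_Icc ha hb
  have hψ' : MemLp ψ' 2 (volume.restrict (Icc α β)) :=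
    (memLp_two_iff_integrable_sq_norm (hint.mono_set hQ).aestronglyMeasurable).2
      (hint2.mono_set hQ)
  have hmid : ‖ψ α - ψ m‖ + ‖ψ m - ψ β‖ ≤ √((β - α) * ∫ s in Icc α β, ‖ψ' s‖ ^ 2) :=
    (norm_sub_add_norm_sub_le_intervalIntegral_norm hαm hmβ
      (hftc α m ha hαm (hmβ.trans hb)) (hftc m β (ha.trans hαm) hmβ hb)
      ((intervalIntegrable_iff_integrableOn_Icc_of_le hαβ).2 (hint.mono_set hQ).norm)).trans
      (intervalIntegral_norm_le_sqrt_mul_integral_norm_sq hαβ hψ')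
  have hQk : √((β - α) * ∫ s in Icc α β, ‖ψ' s‖ ^ 2) ≤ √((β - α) * ∫ s in Icc a b, ‖ψ' s‖ ^ 2) :=
    Real.sqrt_le_sqrt <| mul_le_mul_of_nonneg_left
      (setIntegral_mono_set hint2 (ae_of_all _ fun _ => sq_nonneg _) hQ.eventuallyLE)
      (sub_nonneg.2 hαβ)
  exact sInf_norm_sub_sub_sInf_norm_sub_le hmid hBne fun x hx =>
    (norm_sub_le_of_norm_sub_add_norm_sub_le hmid hx).trans hQk

theorem gap_le_sqrt_k (d : ℕ)
    (ψ ψ' : ℝ → EuclideanSpace ℝ (Fin d)) (a b : ℝ) (hab : a ≤ b)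
    (hint : IntegrableOn ψ' (Icc a b))
    (hint2 : IntegrableOn (fun s => ‖ψ' s‖ ^ 2) (Icc a b))
    (hftc : ∀ x y, a ≤ x → x ≤ y → y ≤ b → ψ y - ψ x = ∫ s in x..y, ψ' s)
    (B : Set (EuclideanSpace ℝ (Fin d))) (hB : IsCompact B) (hBne : B.Nonempty)
    (α β : ℝ) (hαβ : α ≤ β) (ha : a ≤ α) (hb : β ≤ b) :
    sInf {r : ℝ | ∃ c ∈ B, r = ‖ψ ((α + β) / 2) - c‖} -
      sInf {r : ℝ | ∃ x ∈ {y : EuclideanSpace ℝ (Fin d) |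
          ‖ψ α - y‖ + ‖y - ψ β‖ ≤
            Real.sqrt ((β - α) * ∫ s in Icc α β, ‖ψ' s‖ ^ 2)},
        ∃ c ∈ B, r = ‖x - c‖} ≤
      Real.sqrt ((β - α) * ∫ s in Icc a b, ‖ψ' s‖ ^ 2) :=
  gap_le_sqrt_k_general d ψ ψ' a b hint hint2 hftc B hBne α β hαβ ha hb
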